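/- arXiv:2312.01990 — 3 statements merged into one kernel-verified Lean document; each statement's English description precedes it below -/
import Mathlib

section
/- Let d, m ≥ 1 and let G be a random m × d matrix whose entries are i.i.d. standard normal N(0,1) random variables, with rows g_1, …, g_m. For z ∈ ℝ^d define the positive random feature map φ⁺(z) = (1/√m) · exp(−‖z‖²/2) · (exp(⟨g_1, z⟩), …, exp(⟨g_m, z⟩)) ∈ ℝ^m. Then for all x, y ∈ ℝ^d, the expectation over G of ⟨φ⁺(x), φ⁺(y)⟩ equals exp(⟨x, y⟩). -/
open MeasureTheory ProbabilityTheory Real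

/-- The law of a random `m × d` matrix (viewed as `Fin m → Fin d → ℝ`, with rows
`G 0, …, G (m-1)`) whose `m·d` entries are i.i.d. standard normal `N(0,1)`. -/
noncomputable def gaussianMatrix (m d : ℕ) : Measure (Fin m → Fin d → ℝ) :=
  Measure.pi fun _ => Measure.pi fun _ => gaussianReal 0 1

/-!
Each summand depends on a single row `g` of `G`, a standard Gaussian vector, and equals
`(1/m) · exp(-(‖x‖² + ‖y‖²)/2) · exp ⟨g, x + y⟩`. The Gaussian moment generating function
gives `𝔼 exp ⟨g, x + y⟩ = exp (‖x + y‖² / 2)`, and `‖x + y‖² - ‖x‖² - ‖y‖² = 2 ⟨x, y⟩`;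
summing the `m` equal expectations cancels the factor `1/m`.
-/

section

variable {ι : Type*} [Fintype ι]

theorem integral_sum_comp_eval_pi {α : Type*} [MeasurableSpace α] {ν : Measure α}
    [IsProbabilityMeasure ν] {f : α → ℝ} (hf : Integrable f ν) :
    ∫ G, ∑ l, f (G l) ∂(Measure.pi fun _ : ι => ν) =
      Fintype.card ι * ∫ u, f u ∂ν := by
  rw [integral_finsetSum _ fun l _ => integrable_comp_eval (i := l) hf]
  simp_rw [integral_comp_eval (μ := fun _ : ι => ν) hf.aestronglyMeasurable]
  simp only [Finset.sum_const, Finset.card_univ, nsmul_eq_mul]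

theorem exp_sum_mul_eq_prod (r z : ι → ℝ) :
    exp (∑ i, r i * z i) = ∏ i, exp (z i * r i) := by
  simp only [exp_sum, mul_comm]

variable {ν : ι → Measure ℝ} [∀ i, SigmaFinite (ν i)]

theorem integrable_exp_sum_mul_pi {z : ι → ℝ}
    (hz : ∀ i, Integrable (fun u => exp (z i * u)) (ν i)) :
    Integrable (fun r => exp (∑ i, r i * z i)) (Measure.pi ν) := by
  simpa only [exp_sum_mul_eq_prod] using Integrable.fintype_prod hz

theorem integral_exp_sum_mul_pi (z : ι → ℝ) :
    ∫ r, exp (∑ i, r i * z i) ∂(Measure.pi ν) = ∏ i, mgf id (ν i) (z i) := by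
  simp only [exp_sum_mul_eq_prod, integral_fintype_prod_eq_prod (fun i u => exp (z i * u)), mgf,
    id]

theorem integral_exp_sum_mul_gaussianReal_pi (z : ι → ℝ) :
    ∫ r, exp (∑ i, r i * z i) ∂(Measure.pi fun _ => gaussianReal 0 1) =
      exp (∑ i, z i ^ 2 / 2) := by
  rw [integral_exp_sum_mul_pi, exp_sum]
  simp [mgf_id_gaussianReal]

end

theorem positive_random_features_unbiased_general (d m : ℕ) (hm : 1 ≤ m)
    (x y : Fin d → ℝ) :
    ∫ G, (∑ l : Fin m,
        ((1 / Real.sqrt m) * Real.exp (-(∑ i, x i ^ 2) / 2)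
            * Real.exp (∑ i, G l i * x i))
        * ((1 / Real.sqrt m) * Real.exp (-(∑ i, y i ^ 2) / 2)
            * Real.exp (∑ i, G l i * y i))) ∂(gaussianMatrix m d)
      = Real.exp (∑ i, x i * y i) := by
  have hm0 : (m : ℝ) ≠ 0 := Nat.cast_ne_zero.mpr (by omega)
  set c := (m : ℝ)⁻¹ * exp (-(∑ i, x i ^ 2) / 2 + -(∑ i, y i ^ 2) / 2)
  have hsummand : ∀ g : Fin d → ℝ,
      ((1 / √m) * exp (-(∑ i, x i ^ 2) / 2) * exp (∑ i, g i * x i))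
        * ((1 / √m) * exp (-(∑ i, y i ^ 2) / 2) * exp (∑ i, g i * y i))
      = c * exp (∑ i, g i * (x i + y i)) := by
    intro g
    simp only [c, mul_add, Finset.sum_add_distrib, exp_add]
    field_simp
    rw [sq_sqrt m.cast_nonneg]
  have hexponent : -(∑ i, x i ^ 2) / 2 + -(∑ i, y i ^ 2) / 2 + ∑ i, (x i + y i) ^ 2 / 2
      = ∑ i, x i * y i := by
    simp only [neg_div, Finset.sum_div, ← Finset.sum_neg_distrib, ← Finset.sum_add_distrib]
    exact Finset.sum_congr rfl fun i _ => by ring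
  simp only [hsummand]
  rw [gaussianMatrix, integral_sum_comp_eval_pi
      ((integrable_exp_sum_mul_pi fun _ => integrable_exp_mul_gaussianReal _).const_mul c),
    integral_const_mul, integral_exp_sum_mul_gaussianReal_pi, Fintype.card_fin, ← hexponent]
  simp only [c, exp_add]
  field_simp

/-- Unbiasedness of positive random features for the softmax kernel (Lemma 1 of
the Performers paper): with `φ⁺(z) = (1/√m)·exp(-‖z‖²/2)·(exp(⟨g_1,z⟩), …, exp(⟨g_m,z⟩))`,
for all `x, y ∈ ℝ^d` the expectation over the Gaussian matrix `G` of
`⟨φ⁺(x), φ⁺(y)⟩` equals `exp(⟨x, y⟩)`. -/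
theorem positive_random_features_unbiased (d m : ℕ) (hd : 1 ≤ d) (hm : 1 ≤ m)
    (x y : Fin d → ℝ) :
    ∫ G, (∑ l : Fin m,
        ((1 / Real.sqrt m) * Real.exp (-(∑ i, x i ^ 2) / 2)
            * Real.exp (∑ i, G l i * x i))
        * ((1 / Real.sqrt m) * Real.exp (-(∑ i, y i ^ 2) / 2)
            * Real.exp (∑ i, G l i * y i))) ∂(gaussianMatrix m d)
      = Real.exp (∑ i, x i * y i) :=
  positive_random_features_unbiased_general d m hm x y
end

section
/- (Lemma 1) Let d, m ≥ 1, let r > 0, and let x, y ∈ ℝ^d with ‖x‖ = ‖y‖ = r. Let G be a random m × d matrix whose entries are i.i.d. standard normal N(0,1) random variables, with rows g_1, …, g_m, and for z ∈ ℝ^d define φ_exp^rand(z) = (exp(⟨g_1, z⟩), …, exp(⟨g_m, z⟩)) ∈ ℝ^m. Then m · exp(r²) · exp(⟨x, y⟩) equals the expectation over G of ⟨φ_exp^rand(x), φ_exp^rand(y)⟩. -/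
open MeasureTheory ProbabilityTheory Real

/-
Writing `c = x + y`, each summand is `exp ⟨g_l, c⟩`, and since the coordinates of `g_l` are
independent standard normals, `𝔼 exp ⟨g_l, c⟩ = ∏ᵢ 𝔼 exp (gᵢ cᵢ) = exp (‖c‖² / 2)`.
For `‖x‖ = ‖y‖ = r` one has `‖c‖² / 2 = r² + ⟨x, y⟩`, and summing over the `m` rows gives the
claim.
-/

lemma integral_exp_mul_gaussianReal (μ : ℝ) (v : NNReal) (t : ℝ) :
    ∫ u, rexp (t * u) ∂gaussianReal μ v = rexp (μ * t + v * t ^ 2 / 2) :=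
  congrFun mgf_fun_id_gaussianReal t

section PiGaussian

variable {ι : Type*} [Fintype ι] (μ : ℝ) (v : NNReal) (c : ι → ℝ)

lemma integrable_exp_sum_mul_pi_gaussianReal :
    Integrable (fun g : ι → ℝ => rexp (∑ i, g i * c i))
      (Measure.pi fun _ => gaussianReal μ v) := by
  simp_rw [Real.exp_sum, mul_comm _ (c _)]
  exact Integrable.fintype_prod fun i => integrable_exp_mul_gaussianReal (c i)

lemma integral_exp_sum_mul_pi_gaussianReal :
    ∫ g : ι → ℝ, rexp (∑ i, g i * c i) ∂(Measure.pi fun _ => gaussianReal μ v)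
      = rexp (∑ i, (μ * c i + v * c i ^ 2 / 2)) := by
  simp_rw [Real.exp_sum]
  rw [integral_fintype_prod_eq_prod fun i u => rexp (u * c i)]
  refine Finset.prod_congr rfl fun i _ => ?_
  rw [← integral_exp_mul_gaussianReal]
  simp only [mul_comm]

end PiGaussian

lemma integral_exp_row_gaussianMatrix {m d : ℕ} (l : Fin m) (c : Fin d → ℝ) :
    ∫ G, rexp (∑ i, G l i * c i) ∂gaussianMatrix m d = rexp (∑ i, c i ^ 2 / 2) := by
  rw [gaussianMatrix,
    integral_comp_eval (μ := fun _ => Measure.pi fun _ => gaussianReal 0 1) (i := l)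
      (f := fun g : Fin d → ℝ => rexp (∑ i, g i * c i))
      (integrable_exp_sum_mul_pi_gaussianReal 0 1 c).aestronglyMeasurable,
    integral_exp_sum_mul_pi_gaussianReal]
  simp

lemma integrable_exp_row_gaussianMatrix {m d : ℕ} (l : Fin m) (c : Fin d → ℝ) :
    Integrable (fun G => rexp (∑ i, G l i * c i)) (gaussianMatrix m d) :=
  integrable_comp_eval (μ := fun _ => Measure.pi fun _ => gaussianReal 0 1) (i := l)
    (f := fun g : Fin d → ℝ => rexp (∑ i, g i * c i))
    (integrable_exp_sum_mul_pi_gaussianReal 0 1 c)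

theorem lemma1_unbiased_up_to_constant_general (d m : ℕ)
    (r : ℝ) (x y : Fin d → ℝ)
    (hx : Real.sqrt (∑ i, x i ^ 2) = r) (hy : Real.sqrt (∑ i, y i ^ 2) = r) :
    (m : ℝ) * Real.exp (r ^ 2) * Real.exp (∑ i, x i * y i)
      = ∫ G, (∑ l : Fin m,
          Real.exp (∑ i, G l i * x i) * Real.exp (∑ i, G l i * y i))
          ∂(gaussianMatrix m d) := by
  have hx2 : ∑ i, x i ^ 2 = r ^ 2 := by rw [← hx, sq_sqrt (by positivity)]
  have hy2 : ∑ i, y i ^ 2 = r ^ 2 := by rw [← hy, sq_sqrt (by positivity)]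
  have hxy : ∑ i, (x i + y i) ^ 2 / 2 = r ^ 2 + ∑ i, x i * y i := by
    rw [Finset.sum_congr rfl fun i _ =>
        show (x i + y i) ^ 2 / 2 = x i ^ 2 / 2 + y i ^ 2 / 2 + x i * y i by ring,
      Finset.sum_add_distrib, Finset.sum_add_distrib, ← Finset.sum_div, ← Finset.sum_div, hx2, hy2]
    ring
  have hsummand : ∀ (G : Fin m → Fin d → ℝ) l,
      rexp (∑ i, G l i * x i) * rexp (∑ i, G l i * y i) = rexp (∑ i, G l i * (x i + y i)) := by
    intro G l
    simp only [← Real.exp_add, ← Finset.sum_add_distrib, mul_add]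
  simp_rw [hsummand]
  rw [integral_finsetSum _ fun l _ => integrable_exp_row_gaussianMatrix l _]
  simp_rw [integral_exp_row_gaussianMatrix, hxy, Real.exp_add]
  rw [Finset.sum_const, Finset.card_univ, Fintype.card_fin, nsmul_eq_mul, mul_assoc]

/-- Lemma 1 of the paper: for `x, y ∈ ℝ^d` with `‖x‖ = ‖y‖ = r`, and
`φ_exp^rand(z) = (exp(⟨g_1,z⟩), …, exp(⟨g_m,z⟩))` for a random Gaussian matrix `G`
with rows `g_1, …, g_m`, we have
`m · exp(r²) · exp(⟨x,y⟩) = 𝔼_G[⟨φ_exp^rand(x), φ_exp^rand(y)⟩]`. -/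
theorem lemma1_unbiased_up_to_constant (d m : ℕ) (hd : 1 ≤ d) (hm : 1 ≤ m)
    (r : ℝ) (hr : 0 < r) (x y : Fin d → ℝ)
    (hx : Real.sqrt (∑ i, x i ^ 2) = r) (hy : Real.sqrt (∑ i, y i ^ 2) = r) :
    (m : ℝ) * Real.exp (r ^ 2) * Real.exp (∑ i, x i * y i)
      = ∫ G, (∑ l : Fin m,
          Real.exp (∑ i, G l i * x i) * Real.exp (∑ i, G l i * y i))
          ∂(gaussianMatrix m d) :=
  lemma1_unbiased_up_to_constant_general d m r x y hx hy
end

section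
/- Let d, m ≥ 1, let r > 0, and let x, y ∈ ℝ^d with ‖x‖ = ‖y‖ = r, and let θ be the angle between x and y, i.e. cos(θ) = ⟨x,y⟩/r². Let G be a random m × d matrix whose entries are i.i.d. standard normal N(0,1) random variables, with rows g_1, …, g_m, and for z ∈ ℝ^d define φ_exp^rand(z) = (exp(⟨g_1, z⟩), …, exp(⟨g_m, z⟩)) ∈ ℝ^m. Then the variance over G of the normalized estimator ⟨φ_exp^rand(x), φ_exp^rand(y)⟩ / (m · exp(r²)) equals (1/m) · exp(2r²(2cos(θ) + 1)) · (1 − exp(−2r²(1 + cos(θ)))). -/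
/-!
Since `exp ⟨g, x⟩ * exp ⟨g, y⟩ = exp ⟨g, x + y⟩`, the estimator is a multiple of a sum of `m`
independent copies of `exp ⟨g, z⟩` with `g` standard Gaussian and `z = x + y`. The moment
generating function `E exp (t ⟨g, z⟩) = exp (t² ‖z‖² / 2)` at `t = 1, 2` gives
`Var exp ⟨g, z⟩ = exp (2 ‖z‖²) - exp ‖z‖²`, and `‖x + y‖² = 2 r² (1 + cos θ)`.
-/

open MeasureTheory ProbabilityTheory Real

section ExpMoments

variable {Ω : Type*} {mΩ : MeasurableSpace Ω} {μ : Measure Ω} {X : Ω → ℝ}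

lemma memLp_two_exp_mul (hX : AEMeasurable X μ) (t : ℝ)
    (h : Integrable (fun ω ↦ exp (2 * t * X ω)) μ) :
    MemLp (fun ω ↦ exp (t * X ω)) 2 μ := by
  refine (memLp_two_iff_integrable_sq (by fun_prop)).2 (h.congr (ae_of_all _ fun ω ↦ ?_))
  simp only [sq, ← exp_add]
  ring_nf

lemma variance_exp_mul [IsProbabilityMeasure μ] (hX : AEMeasurable X μ) (t : ℝ)
    (h : Integrable (fun ω ↦ exp (2 * t * X ω)) μ) :
    Var[fun ω ↦ exp (t * X ω); μ] = mgf X μ (2 * t) - mgf X μ t ^ 2 := by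
  rw [variance_eq_sub (memLp_two_exp_mul hX t h)]
  simp only [mgf, Pi.pow_apply, ← exp_nat_mul]
  ring_nf

end ExpMoments

noncomputable abbrev gaussianVector (ι : Type*) [Fintype ι] : Measure (ι → ℝ) :=
  Measure.pi fun _ ↦ gaussianReal 0 1

section GaussianVector

variable {ι : Type*} [Fintype ι]

lemma mgf_sum_mul_gaussianVector (z : ι → ℝ) (t : ℝ) :
    mgf (fun g ↦ ∑ i, g i * z i) (gaussianVector ι) t = exp ((∑ i, z i ^ 2) * t ^ 2 / 2) := by
  have hprod : ∀ g : ι → ℝ, exp (t * ∑ i, g i * z i) = ∏ i, exp (t * z i * g i) := fun g ↦ by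
    rw [Finset.mul_sum, exp_sum]
    exact Finset.prod_congr rfl fun i _ ↦ by ring_nf
  have hcoord (s : ℝ) : ∫ u, exp (s * u) ∂gaussianReal 0 1 = exp (s ^ 2 / 2) := by
    simpa [mgf] using congrFun (mgf_id_gaussianReal (μ := 0) (v := 1)) s
  simp only [mgf, hprod]
  rw [integral_fintype_prod_eq_prod (fun i u ↦ exp (t * z i * u))]
  simp only [hcoord, ← exp_sum, Finset.sum_mul, Finset.sum_div]
  exact congrArg exp (Finset.sum_congr rfl fun i _ ↦ by ring)

lemma integrable_exp_mul_sum_mul_gaussianVector (z : ι → ℝ) (t : ℝ) :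
    Integrable (fun g ↦ exp (t * ∑ i, g i * z i)) (gaussianVector ι) := by
  rw [← mgf_pos_iff, mgf_sum_mul_gaussianVector]
  exact exp_pos _

lemma variance_exp_sum_mul_gaussianVector (z : ι → ℝ) :
    Var[fun g ↦ exp (∑ i, g i * z i); gaussianVector ι]
      = exp (2 * ∑ i, z i ^ 2) - exp (∑ i, z i ^ 2) := by
  have h := variance_exp_mul (Measurable.aemeasurable (by fun_prop)) 1
    (integrable_exp_mul_sum_mul_gaussianVector z (2 * 1))
  simp only [one_mul, mgf_sum_mul_gaussianVector, ← exp_nat_mul] at h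
  rw [h]
  ring_nf

lemma variance_sum_exp_rows_gaussianVector {κ : Type*} [Fintype κ] (z : ι → ℝ) :
    Var[fun G : κ → ι → ℝ ↦ ∑ l, exp (∑ i, G l i * z i); Measure.pi fun _ ↦ gaussianVector ι]
      = Fintype.card κ * (exp (2 * ∑ i, z i ^ 2) - exp (∑ i, z i ^ 2)) := by
  have hrow : MemLp (fun g : ι → ℝ ↦ exp (∑ i, g i * z i)) 2 (gaussianVector ι) := by
    simpa using memLp_two_exp_mul (Measurable.aemeasurable (by fun_prop)) 1
      (integrable_exp_mul_sum_mul_gaussianVector z (2 * 1))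
  have h := variance_sum_pi (μ := fun _ : κ ↦ gaussianVector ι) fun _ ↦ hrow
  simp only [Finset.sum_fn] at h
  rw [h, variance_exp_sum_mul_gaussianVector, Finset.sum_const, Finset.card_univ, nsmul_eq_mul]

end GaussianVector

lemma sum_add_sq_eq_of_cos {ι : Type*} [Fintype ι] {x y : ι → ℝ} {r θ : ℝ} (hr : r ≠ 0)
    (hx : √(∑ i, x i ^ 2) = r) (hy : √(∑ i, y i ^ 2) = r)
    (hθ : cos θ = (∑ i, x i * y i) / r ^ 2) :
    ∑ i, (x i + y i) ^ 2 = 2 * r ^ 2 * (1 + cos θ) := by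
  have hx2 : ∑ i, x i ^ 2 = r ^ 2 := by
    rw [← hx, sq_sqrt (Finset.sum_nonneg fun i _ ↦ sq_nonneg _)]
  have hy2 : ∑ i, y i ^ 2 = r ^ 2 := by
    rw [← hy, sq_sqrt (Finset.sum_nonneg fun i _ ↦ sq_nonneg _)]
  have hxy : ∑ i, x i * y i = r ^ 2 * cos θ := by
    rw [hθ]; field_simp
  simp only [add_sq, Finset.sum_add_distrib, hx2, hy2, mul_assoc, ← Finset.mul_sum, hxy]
  ring

theorem normalized_estimator_variance_general (d m : ℕ)
    (r : ℝ) (hr : 0 < r) (x y : Fin d → ℝ)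
    (hx : Real.sqrt (∑ i, x i ^ 2) = r) (hy : Real.sqrt (∑ i, y i ^ 2) = r)
    (θ : ℝ) (hθ : Real.cos θ = (∑ i, x i * y i) / r ^ 2) :
    ProbabilityTheory.variance
      (fun G => (∑ l : Fin m,
          Real.exp (∑ i, G l i * x i) * Real.exp (∑ i, G l i * y i))
        / (m * Real.exp (r ^ 2)))
      (gaussianMatrix m d)
      = (1 / m) * Real.exp (2 * r ^ 2 * (2 * Real.cos θ + 1))
        * (1 - Real.exp (-(2 * r ^ 2 * (1 + Real.cos θ)))) := by
  simp only [← exp_add, ← mul_add, ← Finset.sum_add_distrib, div_eq_mul_inv]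
  rw [variance_mul_const, gaussianMatrix, variance_sum_exp_rows_gaussianVector,
    sum_add_sq_eq_of_cos hr.ne' hx hy hθ, Fintype.card_fin]
  have hexp2s : exp (2 * (2 * r ^ 2 * (1 + cos θ)))
      = exp (2 * r ^ 2 * (2 * cos θ + 1)) * exp (r ^ 2) ^ 2 := by
    rw [← exp_nat_mul, ← exp_add]; congr 1; push_cast; ring
  have hexps : exp (2 * r ^ 2 * (1 + cos θ)) = exp (2 * r ^ 2 * (2 * cos θ + 1))
      * exp (-(2 * r ^ 2 * (1 + cos θ))) * exp (r ^ 2) ^ 2 := by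
    rw [← exp_nat_mul, ← exp_add, ← exp_add]; congr 1; push_cast; ring
  rw [hexp2s, hexps]
  field_simp

/-- For `x, y ∈ ℝ^d` with `‖x‖ = ‖y‖ = r` and angle `θ` between them
(`cos θ = ⟨x,y⟩ / r²`), the variance over the Gaussian matrix `G` of the
normalized estimator `⟨φ_exp^rand(x), φ_exp^rand(y)⟩ / (m·exp(r²))`, where
`φ_exp^rand(z) = (exp(⟨g_1,z⟩), …, exp(⟨g_m,z⟩))`, equals
`(1/m)·exp(2r²(2cos θ + 1))·(1 - exp(-2r²(1 + cos θ)))`. -/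
theorem normalized_estimator_variance (d m : ℕ) (hd : 1 ≤ d) (hm : 1 ≤ m)
    (r : ℝ) (hr : 0 < r) (x y : Fin d → ℝ)
    (hx : Real.sqrt (∑ i, x i ^ 2) = r) (hy : Real.sqrt (∑ i, y i ^ 2) = r)
    (θ : ℝ) (hθ : Real.cos θ = (∑ i, x i * y i) / r ^ 2) :
    ProbabilityTheory.variance
      (fun G => (∑ l : Fin m,
          Real.exp (∑ i, G l i * x i) * Real.exp (∑ i, G l i * y i))
        / (m * Real.exp (r ^ 2)))
      (gaussianMatrix m d)
      = (1 / m) * Real.exp (2 * r ^ 2 * (2 * Real.cos θ + 1))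
        * (1 - Real.exp (-(2 * r ^ 2 * (1 + Real.cos θ)))) :=
  normalized_estimator_variance_general d m r hr x y hx hy θ hθ
end
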